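/- For all positive integers d and n, the following chain of inequalities holds for real tensors of order d: φ(dn, …, dn) ≤ φ_sym((dn)^d) ≤ √(d! · d^{-d}) · φ(n, …, n) ≤ √(d!) · φ(dn, …, dn). -/

import Mathlib

set_option maxHeartbeats 1000000



noncomputable section

/-- Frobenius norm of a real tensor of order `d` with dimensions `n 0, …, n (d-1)`. -/
def frobNorm {d : ℕ} {n : Fin d → ℕ} (T : (∀ k, Fin (n k)) → ℝ) : ℝ :=
  Real.sqrt (∑ i, (T i) ^ 2)

/-- Spectral norm: supremum of `|⟨T, x¹⊗⋯⊗x^d⟩|` over tuples of unit vectors. -/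
def specNorm {d : ℕ} {n : Fin d → ℕ} (T : (∀ k, Fin (n k)) → ℝ) : ℝ :=
  sSup { r : ℝ | ∃ x : ∀ k, EuclideanSpace ℝ (Fin (n k)),
    (∀ k, ‖x k‖ = 1) ∧ r = |∑ i, T i * ∏ k, x k (i k)| }

/-- `φ(n_1,…,n_d)`: infimum of `‖T‖_σ/‖T‖` over nonzero real tensors. -/
def phi {d : ℕ} (n : Fin d → ℕ) : ℝ :=
  sInf { r : ℝ | ∃ T : (∀ k, Fin (n k)) → ℝ, T ≠ 0 ∧ r = specNorm T / frobNorm T }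

/-- `φ_+(n_1,…,n_d)`: infimum of `‖T‖_σ/‖T‖` over nonzero nonnegative tensors. -/
def phiPos {d : ℕ} (n : Fin d → ℕ) : ℝ :=
  sInf { r : ℝ | ∃ T : (∀ k, Fin (n k)) → ℝ,
    T ≠ 0 ∧ (∀ i, 0 ≤ T i) ∧ r = specNorm T / frobNorm T }

/-- `φ_sym(n^d)`: infimum of `‖T‖_σ/‖T‖` over nonzero symmetric real tensors of
order `d` with all dimensions equal to `n`. -/
def phiSym (d n : ℕ) : ℝ :=
  sInf { r : ℝ | ∃ T : (Fin d → Fin n) → ℝ, T ≠ 0 ∧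
    (∀ (π : Equiv.Perm (Fin d)) (i : Fin d → Fin n), T (i ∘ π) = T i) ∧
    r = specNorm (n := fun _ : Fin d => n) T / frobNorm T }

open Finset

variable {d : ℕ} {n : Fin d → ℕ}

lemma frobNorm_nonneg (T : (∀ k, Fin (n k)) → ℝ) : 0 ≤ frobNorm T := Real.sqrt_nonneg _

lemma frobNorm_pos {T : (∀ k, Fin (n k)) → ℝ} (h : T ≠ 0) : 0 < frobNorm T := by
  apply Real.sqrt_pos.2
  obtain ⟨i, hi⟩ : ∃ i, T i ≠ 0 := by
    by_contra hc; push_neg at hc; exact h (funext hc)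
  have h1 : 0 < T i ^ 2 := by positivity
  have h2 := Finset.single_le_sum (f := fun j => T j ^ 2) (fun j _ => sq_nonneg _) (mem_univ i)
  linarith

lemma coord_le_norm {m : ℕ} (x : EuclideanSpace ℝ (Fin m)) (j : Fin m) : |x j| ≤ ‖x‖ := by
  rw [EuclideanSpace.norm_eq, ← Real.sqrt_sq_eq_abs]
  apply Real.sqrt_le_sqrt
  have := Finset.single_le_sum (f := fun j => ‖x j‖ ^ 2) (fun j _ => sq_nonneg _) (mem_univ j)
  simpa [Real.norm_eq_abs, sq_abs] using this

lemma specSet_bddAbove (T : (∀ k, Fin (n k)) → ℝ) :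
    BddAbove { r : ℝ | ∃ x : ∀ k, EuclideanSpace ℝ (Fin (n k)),
      (∀ k, ‖x k‖ = 1) ∧ r = |∑ i, T i * ∏ k, x k (i k)| } := by
  refine ⟨∑ i, |T i|, ?_⟩
  rintro r ⟨x, hx, rfl⟩
  calc |∑ i, T i * ∏ k, x k (i k)| ≤ ∑ i, |T i * ∏ k, x k (i k)| :=
        Finset.abs_sum_le_sum_abs _ _
    _ ≤ ∑ i, |T i| := by
        apply Finset.sum_le_sum; intro i _
        rw [abs_mul]
        have h1 : |∏ k, x k (i k)| ≤ 1 := by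
          rw [Finset.abs_prod]
          exact Finset.prod_le_one (fun k _ => abs_nonneg _)
            (fun k _ => (coord_le_norm _ _).trans_eq (hx k))
        nlinarith [abs_nonneg (T i), abs_nonneg (∏ k, x k (i k))]

lemma specNorm_nonneg (T : (∀ k, Fin (n k)) → ℝ) : 0 ≤ specNorm T :=
  Real.sSup_nonneg (by rintro r ⟨x, hx, rfl⟩; exact abs_nonneg _)

lemma abs_pair_le_specNorm (T : (∀ k, Fin (n k)) → ℝ)
    (x : ∀ k, EuclideanSpace ℝ (Fin (n k))) (hx : ∀ k, ‖x k‖ = 1) :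
    |∑ i, T i * ∏ k, x k (i k)| ≤ specNorm T :=
  le_csSup (specSet_bddAbove T) ⟨x, hx, rfl⟩

lemma pairing_le_specNorm (T : (∀ k, Fin (n k)) → ℝ)
    (y : ∀ k, EuclideanSpace ℝ (Fin (n k))) :
    |∑ i, T i * ∏ k, y k (i k)| ≤ specNorm T * ∏ k, ‖y k‖ := by
  by_cases hz : ∀ k, y k ≠ 0
  · set u : ∀ k, EuclideanSpace ℝ (Fin (n k)) := fun k => ‖y k‖⁻¹ • y k with hu_def
    have hu : ∀ k, ‖u k‖ = 1 := fun k => norm_smul_inv_norm (hz k)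
    have hyk : ∀ k (j : Fin (n k)), y k j = ‖y k‖ * u k j := by
      intro k j
      have : u k j = ‖y k‖⁻¹ * y k j := rfl
      rw [this]
      field_simp [norm_ne_zero_iff.2 (hz k)]
    have key : ∑ i, T i * ∏ k, y k (i k)
        = (∏ k, ‖y k‖) * ∑ i, T i * ∏ k, u k (i k) := by
      rw [Finset.mul_sum]
      apply Finset.sum_congr rfl
      intro i _
      rw [show (∏ k, y k (i k)) = ∏ k, (‖y k‖ * u k (i k)) from
        Finset.prod_congr rfl fun k _ => hyk k (i k), Finset.prod_mul_distrib]
      ring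
    rw [key, abs_mul, abs_of_nonneg (Finset.prod_nonneg fun k _ => norm_nonneg _), mul_comm]
    exact mul_le_mul_of_nonneg_right (abs_pair_le_specNorm T u hu)
      (Finset.prod_nonneg fun k _ => norm_nonneg _)
  · push_neg at hz
    obtain ⟨k0, hk0⟩ := hz
    have : ∑ i, T i * ∏ k, y k (i k) = 0 := by
      apply Finset.sum_eq_zero
      intro i _
      have : y k0 (i k0) = 0 := by rw [hk0]; rfl
      rw [Finset.prod_eq_zero (mem_univ k0) this, mul_zero]
    rw [this, abs_zero]
    exact mul_nonneg (specNorm_nonneg T) (Finset.prod_nonneg fun k _ => norm_nonneg _)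



section Banach

variable {N dd : ℕ}

/-- The multilinear pairing. -/
def fm (S : (Fin dd → Fin N) → ℝ) (x : Fin dd → EuclideanSpace ℝ (Fin N)) : ℝ :=
  ∑ i, S i * ∏ k, x k (i k)

lemma fm_continuous (S : (Fin dd → Fin N) → ℝ) : Continuous (fm S) := by
  apply continuous_finset_sum
  intro i _
  apply Continuous.mul continuous_const
  apply continuous_finset_prod
  intro k _
  exact (continuous_apply (i k)).comp (by fun_prop)

lemma fm_update (S : (Fin dd → Fin N) → ℝ) (x : Fin dd → EuclideanSpace ℝ (Fin N))
    (k : Fin dd) (a : EuclideanSpace ℝ (Fin N)) :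
    fm S (Function.update x k a)
      = ∑ i, S i * (a (i k) * ∏ m ∈ univ.erase k, x m (i m)) := by
  unfold fm
  apply Finset.sum_congr rfl
  intro i _
  congr 1
  rw [← Finset.mul_prod_erase univ _ (mem_univ k), Function.update_self]
  congr 1
  exact Finset.prod_congr rfl fun m hm => by
    rw [Function.update_of_ne (Finset.mem_erase.1 hm).1]

lemma fm_update_add (S : (Fin dd → Fin N) → ℝ) (x : Fin dd → EuclideanSpace ℝ (Fin N))
    (k : Fin dd) (a b : EuclideanSpace ℝ (Fin N)) :
    fm S (Function.update x k (a + b))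
      = fm S (Function.update x k a) + fm S (Function.update x k b) := by
  simp only [fm_update, ← Finset.sum_add_distrib]
  apply Finset.sum_congr rfl
  intro i _
  have : (a + b) (i k) = a (i k) + b (i k) := rfl
  rw [this]; ring

lemma fm_update_smul (S : (Fin dd → Fin N) → ℝ) (x : Fin dd → EuclideanSpace ℝ (Fin N))
    (k : Fin dd) (c : ℝ) (a : EuclideanSpace ℝ (Fin N)) :
    fm S (Function.update x k (c • a)) = c * fm S (Function.update x k a) := by
  simp only [fm_update, Finset.mul_sum]
  apply Finset.sum_congr rfl
  intro i _
  have : (c • a) (i k) = c * a (i k) := rfl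
  rw [this]; ring

lemma fm_scale (S : (Fin dd → Fin N) → ℝ) (x : Fin dd → EuclideanSpace ℝ (Fin N))
    (c : Fin dd → ℝ) :
    fm S (fun k => c k • x k) = (∏ k, c k) * fm S x := by
  unfold fm
  rw [Finset.mul_sum]
  apply Finset.sum_congr rfl
  intro i _
  have : ∀ k, (c k • x k) (i k) = c k * x k (i k) := fun k => rfl
  simp_rw [this, Finset.prod_mul_distrib]
  ring

lemma fm_perm (S : (Fin dd → Fin N) → ℝ)
    (hS : ∀ (π : Equiv.Perm (Fin dd)) i, S (i ∘ π) = S i)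
    (x : Fin dd → EuclideanSpace ℝ (Fin N)) (π : Equiv.Perm (Fin dd)) :
    fm S (x ∘ π) = fm S x := by
  unfold fm
  have h1 : ∀ i : Fin dd → Fin N,
      (∏ k, x (π k) (i k)) = ∏ m, x m (i (π.symm m)) := by
    intro i
    rw [← Equiv.prod_comp π (fun m => x m (i (π.symm m)))]
    exact Finset.prod_congr rfl fun k _ => by rw [Equiv.symm_apply_apply]
  calc ∑ i, S i * ∏ k, (x ∘ π) k (i k)
      = ∑ i, S i * ∏ m, x m ((i ∘ π.symm) m) := by
        refine Finset.sum_congr rfl fun i _ => ?_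
        simp only [Function.comp_apply]
        rw [h1]
    _ = ∑ i, S (i ∘ π) * ∏ m, x m (i m) := by
        rw [← Equiv.sum_comp (Equiv.arrowCongr π (Equiv.refl (Fin N)))
          (fun j => S (j ∘ π) * ∏ m, x m (j m))]
        apply Finset.sum_congr rfl
        intro i _
        have e1 : (Equiv.arrowCongr π (Equiv.refl (Fin N))) i = i ∘ π.symm := rfl
        rw [e1]
        congr 1
        · congr 1; funext m; simp
    _ = ∑ i, S i * ∏ m, x m (i m) := by
        exact Finset.sum_congr rfl fun i _ => by rw [hS]

lemma update_update_comp_swap (p : Fin dd → EuclideanSpace ℝ (Fin N)) {k l : Fin dd}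
    (hkl : k ≠ l) (a b : EuclideanSpace ℝ (Fin N)) :
    (Function.update (Function.update p k a) l b) ∘ (Equiv.swap k l)
      = Function.update (Function.update p k b) l a := by
  funext m
  simp only [Function.comp_apply]
  by_cases hmk : m = k
  · subst hmk
    rw [Equiv.swap_apply_left, Function.update_self, Function.update_of_ne hkl,
      Function.update_self]
  · by_cases hml : m = l
    · subst hml
      rw [Equiv.swap_apply_right, Function.update_of_ne hkl, Function.update_self,
        Function.update_self]
    · rw [Equiv.swap_apply_of_ne_of_ne hmk hml, Function.update_of_ne hml,
        Function.update_of_ne hmk, Function.update_of_ne hml, Function.update_of_ne hmk]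

end Banach

section Banach2
variable {N dd : ℕ}

lemma double_split (F : Fin dd → Fin dd → ℝ) {k l : Fin dd} (hkl : k ≠ l) :
    ∑ m, ∑ m', F m m'
      = (∑ m ∈ (univ.erase k).erase l, ∑ m' ∈ (univ.erase k).erase l, F m m')
        + (∑ m ∈ (univ.erase k).erase l, (F m k + F m l + F k m + F l m))
        + (F k k + F k l + F l k + F l l) := by
  set U := (univ.erase k).erase l with hU
  have hlU : l ∉ U := by simp [hU]
  have hkU : k ∉ insert l U := by simp [hU, hkl]
  have huniv : (univ : Finset (Fin dd)) = insert k (insert l U) := by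
    rw [hU, Finset.insert_erase (Finset.mem_erase.2 ⟨hkl.symm, mem_univ l⟩),
      Finset.insert_erase (mem_univ k)]
  have hsplit : ∀ g : Fin dd → ℝ, ∑ m, g m = g k + g l + ∑ m ∈ U, g m := by
    intro g
    rw [huniv, Finset.sum_insert hkU, Finset.sum_insert hlU]; ring
  rw [hsplit (fun m => ∑ m', F m m')]
  rw [hsplit (F k), hsplit (F l)]
  have h2 : ∑ m ∈ U, ∑ m', F m m' = ∑ m ∈ U, (F m k + F m l + ∑ m' ∈ U, F m m') :=
    Finset.sum_congr rfl fun m _ => hsplit (F m)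
  rw [h2]
  simp only [Finset.sum_add_distrib]
  ring

lemma max_eq_aux {M a b s t : ℝ} (hchain : 4*M ≤ s^2*a + t^2*b) (ha : a ≤ M) (hb : b ≤ M)
    (h5 : s^2 + t^2 = 4) (hs : 0 < s) (ht : 0 < t) : a = M ∧ b = M := by
  have h1 : s^2*a ≤ s^2*M := mul_le_mul_of_nonneg_left ha (sq_nonneg s)
  have h2 : t^2*b ≤ t^2*M := mul_le_mul_of_nonneg_left hb (sq_nonneg t)
  have hs2 := pow_pos hs 2
  have ht2 := pow_pos ht 2
  have h6 : s^2*M + t^2*M = 4*M := by linear_combination M*h5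
  constructor
  · by_contra h
    have hlt : a < M := lt_of_le_of_ne ha h
    nlinarith [mul_lt_mul_of_pos_left hlt hs2]
  · by_contra h
    have hlt : b < M := lt_of_le_of_ne hb h
    nlinarith [mul_lt_mul_of_pos_left hlt ht2]

lemma phi_contra {Fq Fu Fv Q Su Sv Sxy s t c : ℝ} (h1 : Fu ≤ Fq) (h2 : Fv ≤ Fq)
    (e1 : Fq = Q + Sxy + (2 + 2*c^2)) (e2 : Fu = Q + 4*Su + 4) (e3 : Fv = Q + 4*Sv + 4)
    (h4 : s^2*Su + t^2*Sv = Sxy) (h5 : s^2 + t^2 = 4) (h6 : c^2 < 1)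
    (hs : 0 < s) (ht : 0 < t) : False := by
  have k1 : 0 ≤ s^2*(Fq - Fu) := mul_nonneg (sq_nonneg s) (by linarith)
  have k2 : 0 ≤ t^2*(Fq - Fv) := mul_nonneg (sq_nonneg t) (by linarith)
  have key : s^2*(Fq - Fu) + t^2*(Fq - Fv) = 8*c^2 - 8 := by
    rw [e1, e2, e3]; linear_combination (Sxy - 2 + 2*c^2)*h5 - 4*h4
  linarith

lemma banach_key (hdd : 0 < dd) (S : (Fin dd → Fin N) → ℝ)
    (hS : ∀ (π : Equiv.Perm (Fin dd)) i, S (i ∘ π) = S i)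
    {B : ℝ}
    (hB : ∀ u : EuclideanSpace ℝ (Fin N), ‖u‖ = 1 → |fm S (fun _ => u)| ≤ B)
    (x : Fin dd → EuclideanSpace ℝ (Fin N)) (hx : ∀ k, ‖x k‖ = 1) :
    |fm S x| ≤ B := by
  classical
  set K : Set (Fin dd → EuclideanSpace ℝ (Fin N)) :=
    Set.univ.pi (fun _ => Metric.sphere (0 : EuclideanSpace ℝ (Fin N)) 1) with hK_def
  have memK : ∀ y, y ∈ K ↔ ∀ k, ‖y k‖ = 1 := by
    intro y
    simp [hK_def, Set.mem_univ_pi, mem_sphere_zero_iff_norm]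
  have hKc : IsCompact K := isCompact_univ_pi fun _ => isCompact_sphere 0 1
  have hxK : x ∈ K := (memK x).2 hx
  have hfc : Continuous fun y : Fin dd → EuclideanSpace ℝ (Fin N) => |fm S y| :=
    (fm_continuous S).abs
  obtain ⟨p, hpK, hpmax⟩ := hKc.exists_isMaxOn ⟨x, hxK⟩ hfc.continuousOn
  set M := |fm S p| with hM
  set A : Set (Fin dd → EuclideanSpace ℝ (Fin N)) := K ∩ {y | |fm S y| = M} with hA_def
  have hAc : IsCompact A := hKc.inter_right (isClosed_eq hfc continuous_const)
  set Φ : (Fin dd → EuclideanSpace ℝ (Fin N)) → ℝ :=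
    fun y => ∑ m, ∑ m', (inner ℝ (y m) (y m') : ℝ) ^ 2 with hΦ
  have hΦc : Continuous Φ := by
    apply continuous_finset_sum; intro m _
    apply continuous_finset_sum; intro m' _
    exact (Continuous.inner (continuous_apply m) (continuous_apply m')).pow 2
  obtain ⟨q, hqA, hqmax⟩ := hAc.exists_isMaxOn ⟨p, hpK, rfl⟩ hΦc.continuousOn
  have hqK : q ∈ K := hqA.1
  have hqunit : ∀ k, ‖q k‖ = 1 := (memK q).1 hqK
  have hqM : |fm S q| = M := hqA.2
  have claim : ∀ k l, q k = q l ∨ q k = -(q l) := by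
    by_contra hcon
    push_neg at hcon
    obtain ⟨k, l, h1, h2⟩ := hcon
    have hkl : k ≠ l := by rintro rfl; exact h1 rfl
    set X := q k with hXdef
    set Y := q l with hYdef
    have hX : ‖X‖ = 1 := hqunit k
    have hY : ‖Y‖ = 1 := hqunit l
    have hXY1 : X + Y ≠ 0 := fun h => h2 (eq_neg_of_add_eq_zero_left h)
    have hXY2 : X - Y ≠ 0 := sub_ne_zero.2 h1
    set s := ‖X + Y‖ with hsdef
    set t := ‖X - Y‖ with htdef
    have hs : 0 < s := norm_pos_iff.2 hXY1
    have ht : 0 < t := norm_pos_iff.2 hXY2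
    set c := (inner ℝ X Y : ℝ) with hcdef
    have hs2 : s ^ 2 = 2 + 2 * c := by
      rw [hsdef, norm_add_sq_real, hX, hY]; ring
    have ht2 : t ^ 2 = 2 - 2 * c := by
      rw [htdef, norm_sub_sq_real, hX, hY]; ring
    have hc2 : c ^ 2 < 1 := by nlinarith [pow_pos hs 2, pow_pos ht 2]
    set u := s⁻¹ • (X + Y) with hudef
    set v := t⁻¹ • (X - Y) with hvdef
    have hsu : s • u = X + Y := smul_inv_smul₀ hs.ne' (X + Y)
    have htv : t • v = X - Y := smul_inv_smul₀ ht.ne' (X - Y)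
    have hu : ‖u‖ = 1 := by
      rw [hudef, norm_smul, Real.norm_eq_abs, abs_inv, abs_of_pos hs]
      exact inv_mul_cancel₀ hs.ne'
    have hv : ‖v‖ = 1 := by
      rw [hvdef, norm_smul, Real.norm_eq_abs, abs_inv, abs_of_pos ht]
      exact inv_mul_cancel₀ ht.ne'
    set qu := Function.update (Function.update q k u) l u with hqu
    set qv := Function.update (Function.update q k v) l v with hqv
    have hqu_k : qu k = u := by
      rw [hqu, Function.update_of_ne hkl, Function.update_self]
    have hqu_l : qu l = u := by rw [hqu, Function.update_self]
    have hqv_k : qv k = v := by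
      rw [hqv, Function.update_of_ne hkl, Function.update_self]
    have hqv_l : qv l = v := by rw [hqv, Function.update_self]
    set U := (univ.erase k).erase l with hU
    have hmU : ∀ m ∈ U, m ≠ k ∧ m ≠ l := by
      intro m hm
      have h := Finset.mem_erase.1 hm
      exact ⟨(Finset.mem_erase.1 h.2).1, h.1⟩
    have hqu_m : ∀ m ∈ U, qu m = q m := by
      intro m hm
      rw [hqu, Function.update_of_ne (hmU m hm).2, Function.update_of_ne (hmU m hm).1]
    have hqv_m : ∀ m ∈ U, qv m = q m := by
      intro m hm
      rw [hqv, Function.update_of_ne (hmU m hm).2, Function.update_of_ne (hmU m hm).1]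
    have hquK : qu ∈ K := by
      rw [memK]
      intro m
      by_cases hml : m = l
      · rw [hml, hqu_l]; exact hu
      · by_cases hmk : m = k
        · rw [hmk, hqu_k]; exact hu
        · rw [hqu, Function.update_of_ne hml, Function.update_of_ne hmk]; exact hqunit m
    have hqvK : qv ∈ K := by
      rw [memK]
      intro m
      by_cases hml : m = l
      · rw [hml, hqv_l]; exact hv
      · by_cases hmk : m = k
        · rw [hmk, hqv_k]; exact hv
        · rw [hqv, Function.update_of_ne hml, Function.update_of_ne hmk]; exact hqunit m
    -- the bilinear slice
    set g : EuclideanSpace ℝ (Fin N) → EuclideanSpace ℝ (Fin N) → ℝ :=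
      fun a b => fm S (Function.update (Function.update q k a) l b) with hg
    have g_symm : ∀ a b, g a b = g b a := by
      intro a b
      have h := fm_perm S hS (Function.update (Function.update q k a) l b) (Equiv.swap k l)
      rw [update_update_comp_swap q hkl a b] at h
      exact h.symm
    have g_add2 : ∀ a b₁ b₂, g a (b₁ + b₂) = g a b₁ + g a b₂ := by
      intro a b₁ b₂; exact fm_update_add S (Function.update q k a) l b₁ b₂
    have g_smul2 : ∀ (e : ℝ) a b, g a (e • b) = e * g a b := by
      intro e a b; exact fm_update_smul S (Function.update q k a) l e b
    have g_add1 : ∀ a₁ a₂ b, g (a₁ + a₂) b = g a₁ b + g a₂ b := by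
      intro a₁ a₂ b
      rw [g_symm, g_add2, g_symm b a₁, g_symm b a₂]
    have g_smul1 : ∀ (e : ℝ) a b, g (e • a) b = e * g a b := by
      intro e a b
      rw [g_symm, g_smul2, g_symm b a]
    have hgXY : g X Y = fm S q := by
      rw [hg]
      simp only [hXdef, hYdef, Function.update_eq_self]
    have e1 : g (X + Y) (X + Y) = g X X + g X Y + g Y X + g Y Y := by
      rw [g_add1, g_add2, g_add2]; ring
    have g_neg1 : ∀ a b, g (-a) b = -(g a b) := by
      intro a b
      rw [← neg_one_smul ℝ a, g_smul1]; ring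
    have g_neg2 : ∀ a b, g a (-b) = -(g a b) := by
      intro a b
      rw [← neg_one_smul ℝ b, g_smul2]; ring
    have g_sub1 : ∀ a b e, g (a - b) e = g a e - g b e := by
      intro a b e
      rw [sub_eq_add_neg, g_add1, g_neg1]; ring
    have g_sub2 : ∀ a b e, g a (b - e) = g a b - g a e := by
      intro a b e
      rw [sub_eq_add_neg, g_add2, g_neg2]; ring
    have e2 : g (X - Y) (X - Y) = g X X - g X Y - g Y X + g Y Y := by
      rw [g_sub1, g_sub2, g_sub2]; ring
    have par : g (X + Y) (X + Y) - g (X - Y) (X - Y) = 4 * g X Y := by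
      have := g_symm X Y
      linarith [e1, e2]
    have hgu : g (X + Y) (X + Y) = s ^ 2 * fm S qu := by
      rw [← hsu, g_smul1, g_smul2]
      have : g u u = fm S qu := rfl
      rw [this]; ring
    have hgv : g (X - Y) (X - Y) = t ^ 2 * fm S qv := by
      rw [← htv, g_smul1, g_smul2]
      have : g v v = fm S qv := rfl
      rw [this]; ring
    have hquM : |fm S qu| ≤ M := hpmax hquK
    have hqvM : |fm S qv| ≤ M := hpmax hqvK
    have hchain : 4 * M ≤ s ^ 2 * |fm S qu| + t ^ 2 * |fm S qv| := by
      have h41 : 4 * M = |4 * g X Y| := by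
        rw [abs_mul, hgXY, hqM, abs_of_nonneg (by norm_num : (0:ℝ) ≤ 4)]
      rw [h41, ← par, hgu, hgv]
      calc |s ^ 2 * fm S qu - t ^ 2 * fm S qv|
          ≤ |s ^ 2 * fm S qu| + |t ^ 2 * fm S qv| := abs_sub _ _
        _ = s ^ 2 * |fm S qu| + t ^ 2 * |fm S qv| := by
            rw [abs_mul, abs_mul, abs_of_nonneg (sq_nonneg s), abs_of_nonneg (sq_nonneg t)]
    have hst4 : s ^ 2 + t ^ 2 = 4 := by rw [hs2, ht2]; ring
    obtain ⟨hquM', hqvM'⟩ := max_eq_aux hchain hquM hqvM hst4 hs ht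
    have hquA : qu ∈ A := ⟨hquK, hquM'⟩
    have hqvA : qv ∈ A := ⟨hqvK, hqvM'⟩
    have hΦqu : Φ qu ≤ Φ q := hqmax hquA
    have hΦqv : Φ qv ≤ Φ q := hqmax hqvA
    -- Φ computations
    set Q := ∑ m ∈ U, ∑ m' ∈ U, (inner ℝ (q m) (q m') : ℝ) ^ 2 with hQ
    set Su := ∑ m ∈ U, (inner ℝ u (q m) : ℝ) ^ 2 with hSu
    set Sv := ∑ m ∈ U, (inner ℝ v (q m) : ℝ) ^ 2 with hSv
    set Sxy := ∑ m ∈ U, (2 * (inner ℝ X (q m) : ℝ) ^ 2 + 2 * (inner ℝ Y (q m) : ℝ) ^ 2)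
      with hSxy
    have hXX : (inner ℝ X X : ℝ) = 1 := by
      rw [real_inner_self_eq_norm_sq, hX]; norm_num
    have hYY : (inner ℝ Y Y : ℝ) = 1 := by
      rw [real_inner_self_eq_norm_sq, hY]; norm_num
    have huu : (inner ℝ u u : ℝ) = 1 := by
      rw [real_inner_self_eq_norm_sq, hu]; norm_num
    have hvv : (inner ℝ v v : ℝ) = 1 := by
      rw [real_inner_self_eq_norm_sq, hv]; norm_num
    have eΦq : Φ q = Q + Sxy + (2 + 2 * c ^ 2) := by
      show ∑ m, ∑ m', (inner ℝ (q m) (q m') : ℝ) ^ 2 = _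
      rw [double_split (fun m m' => (inner ℝ (q m) (q m') : ℝ) ^ 2) hkl]
      rw [← hU, ← hQ]
      congr 1
      · congr 1
        rw [hSxy]
        apply Finset.sum_congr rfl
        intro m hm
        rw [real_inner_comm (q m) (q k), real_inner_comm (q m) (q l)]
        rw [← hXdef, ← hYdef]
        ring
      · rw [← hXdef, ← hYdef, hXX, hYY, ← hcdef, real_inner_comm X Y, ← hcdef]
        ring
    have eΦu : Φ qu = Q + 4 * Su + 4 := by
      show ∑ m, ∑ m', (inner ℝ (qu m) (qu m') : ℝ) ^ 2 = _
      rw [double_split (fun m m' => (inner ℝ (qu m) (qu m') : ℝ) ^ 2) hkl]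
      rw [← hU]
      have hQ' : ∑ m ∈ U, ∑ m' ∈ U, (inner ℝ (qu m) (qu m') : ℝ) ^ 2 = Q := by
        apply Finset.sum_congr rfl
        intro m hm
        apply Finset.sum_congr rfl
        intro m' hm'
        rw [hqu_m m hm, hqu_m m' hm']
      have hC : ∑ m ∈ U, ((inner ℝ (qu m) (qu k) : ℝ) ^ 2 + (inner ℝ (qu m) (qu l) : ℝ) ^ 2
          + (inner ℝ (qu k) (qu m) : ℝ) ^ 2 + (inner ℝ (qu l) (qu m) : ℝ) ^ 2)
          = 4 * Su := by
        rw [hSu, Finset.mul_sum]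
        apply Finset.sum_congr rfl
        intro m hm
        rw [hqu_m m hm, hqu_k, hqu_l, real_inner_comm (q m) u]
        ring
      rw [hQ', hC, hqu_k, hqu_l, huu]
      ring
    have eΦv : Φ qv = Q + 4 * Sv + 4 := by
      show ∑ m, ∑ m', (inner ℝ (qv m) (qv m') : ℝ) ^ 2 = _
      rw [double_split (fun m m' => (inner ℝ (qv m) (qv m') : ℝ) ^ 2) hkl]
      rw [← hU]
      have hQ' : ∑ m ∈ U, ∑ m' ∈ U, (inner ℝ (qv m) (qv m') : ℝ) ^ 2 = Q := by
        apply Finset.sum_congr rfl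
        intro m hm
        apply Finset.sum_congr rfl
        intro m' hm'
        rw [hqv_m m hm, hqv_m m' hm']
      have hC : ∑ m ∈ U, ((inner ℝ (qv m) (qv k) : ℝ) ^ 2 + (inner ℝ (qv m) (qv l) : ℝ) ^ 2
          + (inner ℝ (qv k) (qv m) : ℝ) ^ 2 + (inner ℝ (qv l) (qv m) : ℝ) ^ 2)
          = 4 * Sv := by
        rw [hSv, Finset.mul_sum]
        apply Finset.sum_congr rfl
        intro m hm
        rw [hqv_m m hm, hqv_k, hqv_l, real_inner_comm (q m) v]
        ring
      rw [hQ', hC, hqv_k, hqv_l, hvv]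
      ring
    have hsum4 : s ^ 2 * Su + t ^ 2 * Sv = Sxy := by
      rw [hSu, hSv, hSxy, Finset.mul_sum, Finset.mul_sum, ← Finset.sum_add_distrib]
      apply Finset.sum_congr rfl
      intro m hm
      have h5 : s * (inner ℝ u (q m) : ℝ) = (inner ℝ X (q m) : ℝ) + (inner ℝ Y (q m) : ℝ) := by
        rw [← real_inner_smul_left, hsu, inner_add_left]
      have h6 : t * (inner ℝ v (q m) : ℝ) = (inner ℝ X (q m) : ℝ) - (inner ℝ Y (q m) : ℝ) := by
        rw [← real_inner_smul_left, htv, inner_sub_left]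
      linear_combination (s * (inner ℝ u (q m) : ℝ) + (inner ℝ X (q m) : ℝ) + (inner ℝ Y (q m) : ℝ)) * h5
        + (t * (inner ℝ v (q m) : ℝ) + (inner ℝ X (q m) : ℝ) - (inner ℝ Y (q m) : ℝ)) * h6
    exact phi_contra hΦqu hΦqv eΦq eΦu eΦv hsum4 hst4 hc2 hs ht
  -- conclude from the claim
  have hk0 : Nonempty (Fin dd) := ⟨⟨0, hdd⟩⟩
  obtain ⟨k0⟩ := hk0
  set q0 := q k0 with hq0def
  have hq0 : ‖q0‖ = 1 := hqunit k0
  set ε : Fin dd → ℝ := fun k => if q k = q0 then 1 else -1 with hε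
  have hqk : ∀ k, q k = ε k • q0 := by
    intro k
    by_cases h : q k = q0
    · simp [hε, h]
    · rcases claim k k0 with h' | h'
      · exact absurd h' h
      · rw [hε]; simp only [h, if_false]
        rw [h', ← hq0def, neg_one_smul]
  have hfq : fm S q = (∏ k, ε k) * fm S (fun _ => q0) := by
    have hq_eq : q = fun k => ε k • q0 := funext hqk
    rw [hq_eq]
    exact fm_scale S (fun _ => q0) ε
  have hprod : |∏ k, ε k| = 1 := by
    rw [Finset.abs_prod]
    rw [Finset.prod_congr rfl (fun k _ => ?_), Finset.prod_const_one]
    by_cases h : q k = q0 <;> simp [hε, h]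
  have hMB : M ≤ B := by
    rw [← hqM, hfq, abs_mul, hprod, one_mul]
    exact hB q0 hq0
  exact le_trans (hpmax hxK) hMB

end Banach2



section SymPart
variable {d n : ℕ}

def symA (j : Fin d → Fin (d * n)) : Fin d → Fin d := fun k => (finProdFinEquiv.symm (j k)).1
def symI (j : Fin d → Fin (d * n)) : Fin d → Fin n := fun k => (finProdFinEquiv.symm (j k)).2

def symT (T : (Fin d → Fin n) → ℝ) (j : Fin d → Fin (d * n)) : ℝ :=
  if h : Function.Bijective (symA j) then T (symI j ∘ (Equiv.ofBijective _ h).symm) else 0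

def blockEquiv : ((Fin d → Fin d) × (Fin d → Fin n)) ≃ (Fin d → Fin (d * n)) :=
  (Equiv.arrowProdEquivProdArrow (Fin d) (fun _ => Fin d) (fun _ => Fin n)).symm.trans
    (Equiv.arrowCongr (Equiv.refl (Fin d)) finProdFinEquiv)

lemma blockEquiv_apply (a : Fin d → Fin d) (i : Fin d → Fin n) (k : Fin d) :
    blockEquiv (a, i) k = finProdFinEquiv (a k, i k) := rfl

lemma symA_block (a : Fin d → Fin d) (i : Fin d → Fin n) : symA (blockEquiv (a, i)) = a := by
  funext k
  simp [symA, blockEquiv_apply]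

lemma symI_block (a : Fin d → Fin d) (i : Fin d → Fin n) : symI (blockEquiv (a, i)) = i := by
  funext k
  simp [symI, blockEquiv_apply]

lemma symT_block (T : (Fin d → Fin n) → ℝ) (a : Fin d → Fin d) (i : Fin d → Fin n) :
    symT T (blockEquiv (a, i))
      = if h : Function.Bijective a then T (i ∘ (Equiv.ofBijective a h).symm) else 0 := by
  simp only [symT, symA_block, symI_block]

def permEquivBij : Equiv.Perm (Fin d) ≃ {a : Fin d → Fin d // Function.Bijective a} where
  toFun σ := ⟨σ, σ.bijective⟩
  invFun a := Equiv.ofBijective a.1 a.2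
  left_inv σ := by ext x; rfl
  right_inv a := rfl

lemma card_bij_filter : (Finset.univ.filter (fun a : Fin d → Fin d => Function.Bijective a)).card
    = d.factorial := by
  rw [← Fintype.card_subtype]
  rw [← Fintype.card_congr (permEquivBij (d := d))]
  rw [Fintype.card_perm, Fintype.card_fin]

lemma sum_precomp (σ : Equiv.Perm (Fin d)) (G : (Fin d → Fin n) → ℝ) :
    ∑ i : Fin d → Fin n, G (i ∘ σ) = ∑ i, G i := by
  have hE : ∀ i : Fin d → Fin n,
      (Equiv.arrowCongr σ.symm (Equiv.refl (Fin n))) i = i ∘ σ := fun i => rfl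
  rw [← Equiv.sum_comp (Equiv.arrowCongr σ.symm (Equiv.refl (Fin n))) G]
  exact Finset.sum_congr rfl fun i _ => rfl

lemma symT_symm (T : (Fin d → Fin n) → ℝ) (π : Equiv.Perm (Fin d))
    (j : Fin d → Fin (d * n)) : symT T (j ∘ π) = symT T j := by
  have hcomp : ∀ h : Function.Bijective (symA j ∘ π), Function.Bijective (symA j) := by
    intro hc
    have h0 : symA j = (symA j ∘ ⇑π) ∘ ⇑π.symm := by funext k; simp
    rw [h0]
    exact hc.comp π.symm.bijective
  have hA : symA (j ∘ π) = symA j ∘ π := rfl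
  by_cases h : Function.Bijective (symA j)
  · have h' : Function.Bijective (symA (j ∘ π)) := by rw [hA]; exact h.comp π.bijective
    rw [symT, symT, dif_pos h', dif_pos h]
    congr 1
    funext m
    have e1 : (symA j) (π ((Equiv.ofBijective _ h').symm m)) = m :=
      Equiv.ofBijective_apply_symm_apply _ h' m
    have e2 : (symA j) ((Equiv.ofBijective _ h).symm m) = m :=
      Equiv.ofBijective_apply_symm_apply _ h m
    have e3 := h.injective (e1.trans e2.symm)
    show symI j (π ((Equiv.ofBijective _ h').symm m)) = symI j ((Equiv.ofBijective _ h).symm m)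
    rw [e3]
  · have h' : ¬ Function.Bijective (symA (j ∘ π)) := by
      rw [hA]; exact fun hc => h (hcomp hc)
    rw [symT, symT, dif_neg h', dif_neg h]

lemma symT_ne_zero (hd : 0 < d) (T : (Fin d → Fin n) → ℝ) (hT : T ≠ 0) : symT T ≠ 0 := by
  obtain ⟨i₀, hi₀⟩ : ∃ i, T i ≠ 0 := by
    by_contra hc; push_neg at hc; exact hT (funext hc)
  intro hzero
  have hbij : Function.Bijective (fun k : Fin d => k) := Function.bijective_id
  have h0 : symT T (blockEquiv (fun k => k, i₀)) = 0 := by rw [hzero]; rfl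
  rw [symT_block, dif_pos hbij] at h0
  have harg : i₀ ∘ (Equiv.ofBijective _ hbij).symm = i₀ :=
    funext fun m => congrArg i₀ (Equiv.ofBijective_apply_symm_apply _ hbij m)
  rw [harg] at h0
  exact hi₀ h0

lemma symT_sq_sum (T : (Fin d → Fin n) → ℝ) :
    ∑ j, (symT T j) ^ 2 = (d.factorial : ℝ) * ∑ i, T i ^ 2 := by
  rw [← Equiv.sum_comp blockEquiv (fun j => (symT T j) ^ 2)]
  rw [Fintype.sum_prod_type]
  have h1 : ∀ a : Fin d → Fin d, ∑ i : Fin d → Fin n, (symT T (blockEquiv (a, i))) ^ 2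
      = if Function.Bijective a then ∑ i, T i ^ 2 else 0 := by
    intro a
    by_cases h : Function.Bijective a
    · rw [if_pos h]
      rw [Finset.sum_congr rfl (fun i (_ : i ∈ univ) => by rw [symT_block, dif_pos h])]
      exact sum_precomp (Equiv.ofBijective a h).symm (fun i => T i ^ 2)
    · rw [if_neg h]
      apply Finset.sum_eq_zero
      intro i _
      rw [symT_block, dif_neg h]
      norm_num
  rw [Finset.sum_congr rfl (fun a _ => h1 a)]
  rw [Finset.sum_ite, Finset.sum_const, Finset.sum_const_zero, add_zero, card_bij_filter]
  rw [nsmul_eq_mul]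

end SymPart


section Bounds

lemma amgm {d : ℕ} (hd : 0 < d) (b : Fin d → ℝ) (hb : ∀ m, 0 ≤ b m) (hsum : ∑ m, b m = 1) :
    ∏ m, b m ≤ (1 / (d : ℝ)) ^ (d : ℕ) := by
  have hdR : (0:ℝ) < d := by exact_mod_cast hd
  have hw : ∀ m ∈ (univ : Finset (Fin d)), (0:ℝ) ≤ 1 / d := fun _ _ => by positivity
  have hw' : ∑ _m : Fin d, (1/(d:ℝ)) = 1 := by
    rw [Finset.sum_const, Finset.card_univ, Fintype.card_fin, nsmul_eq_mul]
    field_simp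
  have key := Real.geom_mean_le_arith_mean_weighted univ (fun _ => 1/(d:ℝ)) b hw hw'
    (fun m _ => hb m)
  have h2 : ∑ m, (1/(d:ℝ)) * b m = 1/(d:ℝ) := by
    rw [← Finset.mul_sum, hsum, mul_one]
  have h3 : (∏ m, b m ^ ((1:ℝ)/(d:ℝ))) ^ (d : ℕ) = ∏ m, b m := by
    rw [← Finset.prod_pow]
    apply Finset.prod_congr rfl
    intro m _
    rw [← Real.rpow_natCast (b m ^ ((1:ℝ)/(d:ℝ))) d, ← Real.rpow_mul (hb m), one_div,
      inv_mul_cancel₀ (ne_of_gt hdR), Real.rpow_one]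
  calc ∏ m, b m = (∏ m, b m ^ ((1:ℝ)/(d:ℝ))) ^ (d : ℕ) := h3.symm
    _ ≤ (1/(d:ℝ)) ^ (d:ℕ) := by
        apply pow_le_pow_left₀ (Finset.prod_nonneg fun m _ => Real.rpow_nonneg (hb m) _)
        exact key.trans (le_of_eq h2)

lemma symT_diag_bound {d n : ℕ} (hd : 0 < d) (T : (Fin d → Fin n) → ℝ)
    (u : EuclideanSpace ℝ (Fin (d * n))) (hu : ‖u‖ = 1) :
    |∑ j, symT T j * ∏ k, u (j k)|
      ≤ (d.factorial : ℝ) * (specNorm (n := fun _ : Fin d => n) T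
          * Real.sqrt ((1/(d:ℝ)) ^ (d:ℕ))) := by
  classical
  set w : Fin d → EuclideanSpace ℝ (Fin n) :=
    fun m => WithLp.toLp 2 (fun i => u (finProdFinEquiv (m, i))) with hw
  have hnorm : ∑ m, ‖w m‖ ^ 2 = 1 := by
    have h0 : ∀ m, ‖w m‖ ^ 2 = ∑ i, (u (finProdFinEquiv (m, i))) ^ 2 := by
      intro m
      rw [EuclideanSpace.norm_eq, Real.sq_sqrt (by positivity)]
      exact Finset.sum_congr rfl fun i _ => by rw [Real.norm_eq_abs, sq_abs]
    rw [Finset.sum_congr rfl fun m _ => h0 m]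
    rw [show (∑ m : Fin d, ∑ i : Fin n, (u (finProdFinEquiv (m, i))) ^ 2)
        = ∑ p : Fin d × Fin n, (u (finProdFinEquiv p)) ^ 2 from
      (Fintype.sum_prod_type (f := fun p : Fin d × Fin n => (u (finProdFinEquiv p)) ^ 2)).symm]
    rw [Equiv.sum_comp finProdFinEquiv (fun j => (u j) ^ 2)]
    have h1 : ‖u‖ ^ 2 = ∑ j, (u j)^2 := by
      rw [EuclideanSpace.norm_eq, Real.sq_sqrt (by positivity)]
      exact Finset.sum_congr rfl fun j _ => by rw [Real.norm_eq_abs, sq_abs]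
    rw [← h1, hu]; norm_num
  set G := ∑ i : Fin d → Fin n, T i * ∏ m, w m (i m) with hG
  have hmain : ∑ j, symT T j * ∏ k, u (j k) = (d.factorial : ℝ) * G := by
    rw [← Equiv.sum_comp blockEquiv (fun j => symT T j * ∏ k, u (j k)),
      Fintype.sum_prod_type]
    have h1 : ∀ a : Fin d → Fin d,
        ∑ i : Fin d → Fin n, symT T (blockEquiv (a, i)) * ∏ k, u (blockEquiv (a, i) k)
        = if Function.Bijective a then G else 0 := by
      intro a
      by_cases h : Function.Bijective a
      · rw [if_pos h]
        have step1 : ∀ i : Fin d → Fin n,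
            symT T (blockEquiv (a, i)) * ∏ k, u (blockEquiv (a, i) k)
            = T (i ∘ (Equiv.ofBijective a h).symm)
              * ∏ k, u (finProdFinEquiv (a k, i k)) := by
          intro i
          rw [symT_block, dif_pos h]
          rfl
        rw [Finset.sum_congr rfl fun i _ => step1 i]
        set σ := Equiv.ofBijective a h with hσ
        set F : (Fin d → Fin n) → ℝ :=
          fun i => T (i ∘ σ.symm) * ∏ k, u (finProdFinEquiv (a k, i k)) with hF
        have step2 : ∀ i : Fin d → Fin n, F (i ∘ σ) = T i * ∏ m, w m (i m) := by
          intro i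
          show T ((i ∘ ⇑σ) ∘ ⇑σ.symm) * ∏ k, u (finProdFinEquiv (a k, (i ∘ ⇑σ) k))
            = T i * ∏ m, w m (i m)
          have e1 : (i ∘ ⇑σ) ∘ ⇑σ.symm = i := by
            funext m; simp
          rw [e1]
          congr 1
          have e2 : ∀ k, u (finProdFinEquiv (a k, (i ∘ ⇑σ) k))
              = (fun m => u (finProdFinEquiv (m, i m))) (σ k) := by
            intro k; rfl
          rw [Finset.prod_congr rfl fun k _ => e2 k,
            Equiv.prod_comp σ (fun m => u (finProdFinEquiv (m, i m)))]
        rw [← sum_precomp σ F, Finset.sum_congr rfl fun i _ => step2 i]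
      · rw [if_neg h]
        apply Finset.sum_eq_zero
        intro i _
        rw [symT_block, dif_neg h, zero_mul]
    rw [Finset.sum_congr rfl fun a _ => h1 a, Finset.sum_ite, Finset.sum_const,
      Finset.sum_const_zero, add_zero, card_bij_filter, nsmul_eq_mul]
  rw [hmain, abs_mul, abs_of_nonneg (by positivity : (0:ℝ) ≤ (d.factorial : ℝ))]
  apply mul_le_mul_of_nonneg_left _ (by positivity : (0:ℝ) ≤ (d.factorial : ℝ))
  have h2 := pairing_le_specNorm (n := fun _ : Fin d => n) T w
  have h3 : ∏ m, ‖w m‖ ≤ Real.sqrt ((1/(d:ℝ))^(d:ℕ)) := by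
    rw [Real.le_sqrt (Finset.prod_nonneg fun m _ => norm_nonneg _) (by positivity)]
    rw [← Finset.prod_pow]
    exact amgm hd (fun m => ‖w m‖^2) (fun m => sq_nonneg _) hnorm
  calc |G| ≤ specNorm (n := fun _ : Fin d => n) T * ∏ m, ‖w m‖ := h2
    _ ≤ specNorm (n := fun _ : Fin d => n) T * Real.sqrt ((1/(d:ℝ))^(d:ℕ)) :=
        mul_le_mul_of_nonneg_left h3 (specNorm_nonneg _)

lemma specNorm_symT_le {d n : ℕ} (hd : 0 < d) (T : (Fin d → Fin n) → ℝ) :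
    specNorm (n := fun _ : Fin d => d * n) (symT T)
      ≤ (d.factorial : ℝ) * (specNorm (n := fun _ : Fin d => n) T
          * Real.sqrt ((1/(d:ℝ)) ^ (d:ℕ))) := by
  apply Real.sSup_le
  · rintro r ⟨x, hx, rfl⟩
    exact banach_key hd (symT T) (fun π i => symT_symm T π i)
      (fun u hu => symT_diag_bound hd T u hu) x hx
  · have := specNorm_nonneg (n := fun _ : Fin d => n) T
    positivity

end Bounds

section Assembly
variable {d n : ℕ}

lemma ineq2_core (hd : 0 < d) (hn : 0 < n) (T : (Fin d → Fin n) → ℝ) (hT : T ≠ 0) :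
    phiSym d (d * n)
      ≤ Real.sqrt ((d.factorial : ℝ) * (d:ℝ) ^ (-(d:ℝ)))
        * (specNorm (n := fun _ : Fin d => n) T / frobNorm T) := by
  have hSne : symT T ≠ 0 := symT_ne_zero hd T hT
  have hfT : 0 < frobNorm T := frobNorm_pos hT
  have hfactpos : (0:ℝ) < (d.factorial : ℝ) := by exact_mod_cast d.factorial_pos
  have hsf : 0 < Real.sqrt (d.factorial : ℝ) := Real.sqrt_pos.2 hfactpos
  have frobS : frobNorm (n := fun _ : Fin d => d * n) (symT T)
      = Real.sqrt (d.factorial : ℝ) * frobNorm T := by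
    unfold frobNorm
    rw [symT_sq_sum, Real.sqrt_mul (le_of_lt hfactpos)]
  have h1 : phiSym d (d * n) ≤ specNorm (n := fun _ : Fin d => d * n) (symT T)
      / frobNorm (n := fun _ : Fin d => d * n) (symT T) := by
    apply csInf_le
    · refine ⟨0, ?_⟩
      rintro r ⟨T', h1', h2', rfl⟩
      exact div_nonneg (specNorm_nonneg _) (frobNorm_nonneg _)
    · exact ⟨symT T, hSne, fun π i => symT_symm T π i, rfl⟩
  have h2 : specNorm (n := fun _ : Fin d => d * n) (symT T)
      / frobNorm (n := fun _ : Fin d => d * n) (symT T)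
      ≤ ((d.factorial : ℝ) * (specNorm (n := fun _ : Fin d => n) T
          * Real.sqrt ((1/(d:ℝ)) ^ (d:ℕ))))
        / (Real.sqrt (d.factorial : ℝ) * frobNorm T) := by
    rw [frobS]
    exact (div_le_div_iff_of_pos_right (by positivity)).2 (specNorm_symT_le hd T)
  have hq : (d:ℝ) ^ (-(d:ℝ)) = (1/(d:ℝ)) ^ (d:ℕ) := by
    rw [Real.rpow_neg (by positivity), Real.rpow_natCast (d:ℝ) d, one_div, inv_pow]
  have hsplit : Real.sqrt ((d.factorial:ℝ) * (d:ℝ) ^ (-(d:ℝ)))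
      = Real.sqrt (d.factorial:ℝ) * Real.sqrt ((1/(d:ℝ)) ^ (d:ℕ)) := by
    rw [hq, Real.sqrt_mul (le_of_lt hfactpos)]
  have ha2 : Real.sqrt (d.factorial:ℝ) * Real.sqrt (d.factorial:ℝ) = (d.factorial:ℝ) :=
    Real.mul_self_sqrt (le_of_lt hfactpos)
  have h3 : ((d.factorial : ℝ) * (specNorm (n := fun _ : Fin d => n) T
          * Real.sqrt ((1/(d:ℝ)) ^ (d:ℕ))))
        / (Real.sqrt (d.factorial : ℝ) * frobNorm T)
      = (Real.sqrt (d.factorial:ℝ) * Real.sqrt ((1/(d:ℝ)) ^ (d:ℕ)))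
        * (specNorm (n := fun _ : Fin d => n) T / frobNorm T) := by
    rw [show (Real.sqrt (d.factorial:ℝ) * Real.sqrt ((1/(d:ℝ)) ^ (d:ℕ)))
        * (specNorm (n := fun _ : Fin d => n) T / frobNorm T)
        = ((Real.sqrt (d.factorial:ℝ) * Real.sqrt ((1/(d:ℝ)) ^ (d:ℕ)))
          * specNorm (n := fun _ : Fin d => n) T) / frobNorm T from
      (mul_div_assoc _ _ _).symm]
    rw [div_eq_div_iff (mul_ne_zero hsf.ne' hfT.ne') hfT.ne']
    linear_combination (-(specNorm (n := fun _ : Fin d => n) T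
      * Real.sqrt ((1/(d:ℝ)) ^ (d:ℕ)) * frobNorm T)) * ha2
  rw [hsplit]
  exact h1.trans (h2.trans_eq (h3.trans rfl))

def blockT (T : (Fin d → Fin (d * n)) → ℝ) (b : Fin d → Fin d) : (Fin d → Fin n) → ℝ :=
  fun i => T (blockEquiv (b, i))

lemma blockT_sq_sum (T : (Fin d → Fin (d * n)) → ℝ) :
    ∑ b, ∑ i, (blockT T b i) ^ 2 = ∑ j, T j ^ 2 := by
  rw [← Equiv.sum_comp blockEquiv (fun j => T j ^ 2), Fintype.sum_prod_type]
  rfl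

lemma specNorm_blockT_le (T : (Fin d → Fin (d * n)) → ℝ) (b : Fin d → Fin d) :
    specNorm (n := fun _ : Fin d => n) (blockT T b)
      ≤ specNorm (n := fun _ : Fin d => d * n) T := by
  apply Real.sSup_le _ (specNorm_nonneg _)
  rintro r ⟨y, hy, rfl⟩
  set x : ∀ _k : Fin d, EuclideanSpace ℝ (Fin (d * n)) := fun k =>
    WithLp.toLp 2 (fun j => if (finProdFinEquiv.symm j).1 = b k
      then y k ((finProdFinEquiv.symm j).2) else 0) with hx
  have hxval : ∀ k (a : Fin d) (i : Fin n),
      x k (finProdFinEquiv (a, i)) = if a = b k then y k i else 0 := by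
    intro k a i
    show (if (finProdFinEquiv.symm (finProdFinEquiv (a, i))).1 = b k
        then y k ((finProdFinEquiv.symm (finProdFinEquiv (a, i))).2) else 0) = _
    rw [Equiv.symm_apply_apply]
  have hxnorm : ∀ k, ‖x k‖ = 1 := by
    intro k
    have hsq : ‖x k‖ ^ 2 = 1 := by
      rw [EuclideanSpace.norm_eq, Real.sq_sqrt (by positivity)]
      have e0 : ∀ j, ‖x k j‖ ^ 2 = (x k j) ^ 2 := fun j => by
        rw [Real.norm_eq_abs, sq_abs]
      rw [Finset.sum_congr rfl fun j _ => e0 j,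
        ← Equiv.sum_comp finProdFinEquiv (fun j => (x k j) ^ 2), Fintype.sum_prod_type]
      have e1 : ∀ a : Fin d, ∑ i, (x k (finProdFinEquiv (a, i))) ^ 2
          = if a = b k then ∑ i, (y k i) ^ 2 else 0 := by
        intro a
        by_cases hab : a = b k
        · rw [if_pos hab]
          exact Finset.sum_congr rfl fun i _ => by rw [hxval, if_pos hab]
        · rw [if_neg hab]
          apply Finset.sum_eq_zero
          intro i _
          rw [hxval, if_neg hab]
          norm_num
      rw [Finset.sum_congr rfl fun a _ => e1 a, Finset.sum_ite_eq' univ (b k),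
        if_pos (mem_univ _)]
      have e2 : ‖y k‖ ^ 2 = ∑ i, (y k i) ^ 2 := by
        rw [EuclideanSpace.norm_eq, Real.sq_sqrt (by positivity)]
        exact Finset.sum_congr rfl fun i _ => by rw [Real.norm_eq_abs, sq_abs]
      rw [← e2, hy k]
      norm_num
    calc ‖x k‖ = Real.sqrt (‖x k‖ ^ 2) := (Real.sqrt_sq (norm_nonneg _)).symm
      _ = 1 := by rw [hsq, Real.sqrt_one]
  have hpair : ∑ i, blockT T b i * ∏ k, y k (i k) = ∑ j, T j * ∏ k, x k (j k) := by
    rw [← Equiv.sum_comp blockEquiv (fun j => T j * ∏ k, x k (j k)), Fintype.sum_prod_type]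
    have h1 : ∀ (a : Fin d → Fin d) (i : Fin d → Fin n),
        (∏ k, x k (blockEquiv (a, i) k)) = if a = b then ∏ k, y k (i k) else 0 := by
      intro a i
      have hv : ∀ k, x k (blockEquiv (a, i) k) = if a k = b k then y k (i k) else 0 := by
        intro k
        rw [blockEquiv_apply, hxval]
      by_cases hab : a = b
      · subst hab
        rw [if_pos rfl]
        exact Finset.prod_congr rfl fun k _ => by rw [hv, if_pos rfl]
      · rw [if_neg hab]
        obtain ⟨k0, hk0⟩ : ∃ k, a k ≠ b k := by
          by_contra hc; push_neg at hc; exact hab (funext hc)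
        apply Finset.prod_eq_zero (mem_univ k0)
        rw [hv, if_neg hk0]
    have h2 : ∀ a : Fin d → Fin d,
        ∑ i : Fin d → Fin n, T (blockEquiv (a, i)) * ∏ k, x k (blockEquiv (a, i) k)
        = if a = b then ∑ i, blockT T b i * ∏ k, y k (i k) else 0 := by
      intro a
      by_cases hab : a = b
      · subst hab
        rw [if_pos rfl]
        apply Finset.sum_congr rfl
        intro i _
        rw [h1, if_pos rfl]
        rfl
      · rw [if_neg hab]
        apply Finset.sum_eq_zero
        intro i _
        rw [h1, if_neg hab, mul_zero]
    rw [Finset.sum_congr rfl fun a _ => h2 a, Finset.sum_ite_eq' univ b,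
      if_pos (mem_univ _)]
  rw [hpair]
  exact abs_pair_le_specNorm T x hxnorm

lemma ineq3_core (hd : 0 < d) (hn : 0 < n) (T : (Fin d → Fin (d * n)) → ℝ) (hT : T ≠ 0) :
    phi (fun _ : Fin d => n)
      ≤ Real.sqrt ((d:ℝ) ^ (d:ℕ))
        * (specNorm (n := fun _ : Fin d => d * n) T / frobNorm T) := by
  obtain ⟨b, _, hbmax⟩ := Finset.exists_max_image univ
    (fun b => ∑ i, (blockT T b i) ^ 2) ⟨fun _ => ⟨0, hd⟩, mem_univ _⟩
  have hTpos : 0 < ∑ j, T j ^ 2 := Real.sqrt_pos.1 (frobNorm_pos hT)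
  have hcard : (univ : Finset (Fin d → Fin d)).card = d ^ d := by
    rw [Finset.card_univ, Fintype.card_fun, Fintype.card_fin]
  have hle : ∑ j, T j ^ 2 ≤ (d:ℝ) ^ (d:ℕ) * ∑ i, (blockT T b i) ^ 2 := by
    rw [← blockT_sq_sum T]
    calc ∑ b', ∑ i, (blockT T b' i) ^ 2
        ≤ (univ : Finset (Fin d → Fin d)).card • (∑ i, (blockT T b i) ^ 2) :=
          Finset.sum_le_card_nsmul _ _ _ (fun b' hb' => hbmax b' hb')
      _ = (d:ℝ) ^ (d:ℕ) * ∑ i, (blockT T b i) ^ 2 := by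
          rw [hcard, nsmul_eq_mul]
          push_cast
          ring
  have hBsumnn : 0 ≤ ∑ i, (blockT T b i) ^ 2 := Finset.sum_nonneg fun i _ => sq_nonneg _
  have hbpos : 0 < ∑ i, (blockT T b i) ^ 2 := by
    rcases lt_or_eq_of_le hBsumnn with h | h
    · exact h
    · exfalso
      rw [← h] at hle
      have hdd : (0:ℝ) < (d:ℝ) ^ (d:ℕ) := by positivity
      nlinarith
  have hBne : blockT T b ≠ 0 := by
    intro hc
    rw [hc] at hbpos
    simp at hbpos
  have hfB : 0 < frobNorm (n := fun _ : Fin d => n) (blockT T b) := frobNorm_pos hBne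
  have hfT : 0 < frobNorm (n := fun _ : Fin d => d * n) T := frobNorm_pos hT
  have hfrob : frobNorm (n := fun _ : Fin d => d * n) T
      ≤ Real.sqrt ((d:ℝ) ^ (d:ℕ)) * frobNorm (n := fun _ : Fin d => n) (blockT T b) := by
    unfold frobNorm
    rw [← Real.sqrt_mul (by positivity : (0:ℝ) ≤ (d:ℝ) ^ (d:ℕ))]
    exact Real.sqrt_le_sqrt hle
  have h1 : phi (fun _ : Fin d => n)
      ≤ specNorm (n := fun _ : Fin d => n) (blockT T b)
        / frobNorm (n := fun _ : Fin d => n) (blockT T b) := by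
    apply csInf_le
    · refine ⟨0, ?_⟩
      rintro r ⟨T', h1', rfl⟩
      exact div_nonneg (specNorm_nonneg _) (frobNorm_nonneg _)
    · exact ⟨blockT T b, hBne, rfl⟩
  have key : specNorm (n := fun _ : Fin d => n) (blockT T b)
        * frobNorm (n := fun _ : Fin d => d * n) T
      ≤ (Real.sqrt ((d:ℝ) ^ (d:ℕ)) * specNorm (n := fun _ : Fin d => d * n) T)
        * frobNorm (n := fun _ : Fin d => n) (blockT T b) := by
    calc specNorm (n := fun _ : Fin d => n) (blockT T b)
          * frobNorm (n := fun _ : Fin d => d * n) T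
        ≤ specNorm (n := fun _ : Fin d => d * n) T
          * (Real.sqrt ((d:ℝ) ^ (d:ℕ)) * frobNorm (n := fun _ : Fin d => n) (blockT T b)) :=
          mul_le_mul (specNorm_blockT_le T b) hfrob (le_of_lt hfT) (specNorm_nonneg _)
      _ = (Real.sqrt ((d:ℝ) ^ (d:ℕ)) * specNorm (n := fun _ : Fin d => d * n) T)
          * frobNorm (n := fun _ : Fin d => n) (blockT T b) := by ring
  have h2 : specNorm (n := fun _ : Fin d => n) (blockT T b)
        / frobNorm (n := fun _ : Fin d => n) (blockT T b)
      ≤ Real.sqrt ((d:ℝ) ^ (d:ℕ))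
        * (specNorm (n := fun _ : Fin d => d * n) T
          / frobNorm (n := fun _ : Fin d => d * n) T) := by
    rw [mul_div_assoc'] at *
    rw [div_le_div_iff₀ hfB hfT]
    exact key
  exact h1.trans h2

end Assembly


theorem stmt_16 (d n : ℕ) (hd : 0 < d) (hn : 0 < n) :
    phi (fun _ : Fin d => d * n) ≤ phiSym d (d * n) ∧
    phiSym d (d * n) ≤
      Real.sqrt ((d.factorial : ℝ) * (d : ℝ) ^ (-(d : ℝ))) * phi (fun _ : Fin d => n) ∧
    Real.sqrt ((d.factorial : ℝ) * (d : ℝ) ^ (-(d : ℝ))) * phi (fun _ : Fin d => n) ≤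
      Real.sqrt (d.factorial : ℝ) * phi (fun _ : Fin d => d * n) := by
  have hdn : 0 < d * n := Nat.mul_pos hd hn
  have hfactpos : (0:ℝ) < (d.factorial : ℝ) := by exact_mod_cast d.factorial_pos
  have hone_ne : ((fun _ => 1 : (Fin d → Fin (d * n)) → ℝ)) ≠ 0 := by
    intro hc
    have := congrFun hc (fun _ => ⟨0, hdn⟩)
    norm_num at this
  have hone_ne' : ((fun _ => 1 : (Fin d → Fin n) → ℝ)) ≠ 0 := by
    intro hc
    have := congrFun hc (fun _ => ⟨0, hn⟩)
    norm_num at this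
  refine ⟨?_, ?_, ?_⟩
  · apply csInf_le_csInf
    · refine ⟨0, ?_⟩
      rintro r ⟨T, hT, rfl⟩
      exact div_nonneg (specNorm_nonneg _) (frobNorm_nonneg _)
    · exact ⟨_, (fun _ => 1), hone_ne, fun π i => rfl, rfl⟩
    · rintro r ⟨T, hT, hsymm, rfl⟩
      exact ⟨T, hT, rfl⟩
  · have hc : 0 < Real.sqrt ((d.factorial : ℝ) * (d:ℝ) ^ (-(d:ℝ))) := by
      apply Real.sqrt_pos.2
      apply mul_pos hfactpos
      exact Real.rpow_pos_of_pos (by exact_mod_cast hd) _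
    rw [← div_le_iff₀' hc]
    apply le_csInf
    · exact ⟨_, (fun _ => 1), hone_ne', rfl⟩
    · rintro r ⟨T, hT, rfl⟩
      rw [div_le_iff₀' hc]
      exact ineq2_core hd hn T hT
  · have hddpos : (0:ℝ) < Real.sqrt ((d:ℝ) ^ (d:ℕ)) := by
      apply Real.sqrt_pos.2
      positivity
    have hstep : phi (fun _ : Fin d => n) / Real.sqrt ((d:ℝ) ^ (d:ℕ))
        ≤ phi (fun _ : Fin d => d * n) := by
      apply le_csInf
      · exact ⟨_, (fun _ => 1), hone_ne, rfl⟩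
      · rintro r ⟨T, hT, rfl⟩
        rw [div_le_iff₀ hddpos]
        rw [mul_comm]
        exact ineq3_core hd hn T hT
    have hq : (d:ℝ) ^ (-(d:ℝ)) = ((d:ℝ) ^ (d:ℕ))⁻¹ := by
      rw [Real.rpow_neg (by positivity), Real.rpow_natCast (d:ℝ) d]
    have hkey : Real.sqrt ((d.factorial:ℝ) * (d:ℝ) ^ (-(d:ℝ))) * phi (fun _ : Fin d => n)
        = Real.sqrt (d.factorial:ℝ)
          * (phi (fun _ : Fin d => n) / Real.sqrt ((d:ℝ) ^ (d:ℕ))) := by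
      rw [hq, Real.sqrt_mul (le_of_lt hfactpos), Real.sqrt_inv, div_eq_mul_inv]
      ring
    rw [hkey]
    exact mul_le_mul_of_nonneg_left hstep (Real.sqrt_nonneg _)
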